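/- Let M_U ∈ {0,1}^{h×d} have z_U zero entries and M_v ∈ {0,1}^h have z_v zero entries, and let X = {x ∈ ℝ^d : ‖x‖₂ < b}. Then (1/vol(X)) ∫_X √(Σ_{i : M_{v,i}=1} ‖M_{U,i,:} ⊙ x‖₂²) dx ≤ √((h − max{z_U, d·z_v}/d) · d b²/(d+2)), where the sum runs over rows i with M_{v,i} = 1. -/

import Mathlib

open MeasureTheory ProbabilityTheory Real Finset

/-!
By Jensen's inequality for the concave square root, the average of `√F` over the ball is at most
`√` of the average of the quadratic form `F x = ∑_{i ∈ S} ∑_j (M_U i j x_j)²`, where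
`S = {i | M_v i = 1}`. Coordinate swaps preserve the ball, so each `x_j²` averages to `1/d` of the
average of `‖x‖²`, which is `d b² / (d + 2)` by integration in polar coordinates; hence `F`
averages to `(∑_{i ∈ S} ∑_j M_U i j²) · b² / (d + 2)`. That double sum counts the nonzero entries
of the rows in `S`, so it is at most `h d - z_U`, and also at most `(h - z_v) d`.
-/

open Metric Module

theorem Continuous.integrableOn_ball {X : Type*} [MetricSpace X] [ProperSpace X]
    [MeasurableSpace X] [OpensMeasurableSpace X] {μ : Measure X} [IsFiniteMeasureOnCompacts μ]
    {f : X → ℝ} (hf : Continuous f) (x : X) (r : ℝ) : IntegrableOn f (ball x r) μ :=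
  (hf.continuousOn.integrableOn_compact (isCompact_closedBall x r)).mono_set ball_subset_closedBall

section BallMoments

variable {E : Type*} [NormedAddCommGroup E] [NormedSpace ℝ E] [FiniteDimensional ℝ E]
  [MeasurableSpace E] [BorelSpace E] [Nontrivial E] (μ : Measure E) [μ.IsAddHaarMeasure]

theorem integral_norm_sq_ball {b : ℝ} (hb : 0 ≤ b) :
    ∫ x in ball (0 : E) b, ‖x‖ ^ 2 ∂μ
      = μ.real (ball 0 b) * (finrank ℝ E * b ^ 2 / (finrank ℝ E + 2)) := by
  set n := finrank ℝ E
  have hn : 1 ≤ n := Module.finrank_pos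
  have h_radial : ∫ r in Set.Ioi (0 : ℝ), r ^ (n - 1) • (Set.Iio b).indicator (· ^ 2) r
      = b ^ (n + 2) / (n + 2) := by
    have : Set.EqOn (fun r => r ^ (n - 1) • (Set.Iio b).indicator (· ^ 2) r)
        ((Set.Iio b).indicator (· ^ (n + 1))) (Set.Ioi 0) := by
      intro r _
      by_cases hr : r < b
      · simp only [hr, Set.indicator_of_mem, Set.mem_Iio, smul_eq_mul, ← pow_add]
        congr 1
        omega
      · simp [hr]
    rw [setIntegral_congr_fun measurableSet_Ioi this, setIntegral_indicator measurableSet_Iio,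
      Set.Ioi_inter_Iio, ← integral_Ioc_eq_integral_Ioo,
      ← intervalIntegral.integral_of_le hb, integral_pow]
    push_cast
    ring_nf
  have h_norm :
      ∫ x in ball (0 : E) b, ‖x‖ ^ 2 ∂μ = ∫ x, (Set.Iio b).indicator (· ^ 2) ‖x‖ ∂μ := by
    rw [← integral_indicator measurableSet_ball]
    congr 1 with x
    by_cases hx : ‖x‖ < b <;> simp [Set.indicator, hx]
  rw [h_norm, integral_fun_norm_addHaar, h_radial, measureReal_def, measureReal_def,
    μ.addHaar_ball 0 hb, ENNReal.toReal_mul, ENNReal.toReal_ofReal (by positivity)]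
  simp only [nsmul_eq_mul, smul_eq_mul, pow_add, n]
  field_simp

end BallMoments

section EuclideanBall

variable {ι : Type*} [Fintype ι] {b : ℝ}

theorem integral_sq_apply_ball_eq [DecidableEq ι] (j k : ι) :
    ∫ x in ball (0 : EuclideanSpace ℝ ι) b, x j ^ 2
      = ∫ x in ball (0 : EuclideanSpace ℝ ι) b, x k ^ 2 := by
  let σ : EuclideanSpace ℝ ι ≃ₗᵢ[ℝ] EuclideanSpace ℝ ι :=
    LinearIsometryEquiv.piLpCongrLeft 2 ℝ ℝ (Equiv.swap j k)
  have h_ball : σ ⁻¹' ball 0 b = ball 0 b := by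
    ext x
    simp only [Set.mem_preimage, mem_ball_zero_iff, σ.norm_map]
  have h_swap (x : EuclideanSpace ℝ ι) : σ x k = x j := by
    simp [σ, LinearIsometryEquiv.piLpCongrLeft_apply, Equiv.piCongrLeft'_apply]
  calc ∫ x in ball (0 : EuclideanSpace ℝ ι) b, x j ^ 2
      = ∫ x in σ ⁻¹' ball 0 b, σ x k ^ 2 := by simp only [h_swap, h_ball]
    _ = _ := σ.measurePreserving.setIntegral_preimage_emb
      σ.toHomeomorph.toMeasurableEquiv.measurableEmbedding (fun y => y k ^ 2) _

theorem integral_sq_apply_ball (hb : 0 ≤ b) (j : ι) :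
    ∫ x in ball (0 : EuclideanSpace ℝ ι) b, x j ^ 2
      = volume.real (ball (0 : EuclideanSpace ℝ ι) b) * (b ^ 2 / (Fintype.card ι + 2)) := by
  classical
  have : Nonempty ι := ⟨j⟩
  have h_sum : ∑ k : ι, ∫ x in ball (0 : EuclideanSpace ℝ ι) b, x k ^ 2
      = ∫ x in ball (0 : EuclideanSpace ℝ ι) b, ‖x‖ ^ 2 := by
    rw [← integral_finsetSum _ fun k _ => Continuous.integrableOn_ball (by fun_prop) _ _]
    simp only [EuclideanSpace.norm_sq_eq, Real.norm_eq_abs, sq_abs]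
  rw [Finset.sum_congr rfl fun k _ => integral_sq_apply_ball_eq k j, Finset.sum_const,
    Finset.card_univ, nsmul_eq_mul, integral_norm_sq_ball _ hb, finrank_euclideanSpace] at h_sum
  have : (Fintype.card ι : ℝ) ≠ 0 := by positivity
  field_simp at h_sum ⊢
  linarith

theorem setAverage_sum_sum_sq_mul_apply_ball {κ : Type*} (hb : 0 < b)
    (A : κ → ι → ℝ) (S : Finset κ) :
    ⨍ x in ball (0 : EuclideanSpace ℝ ι) b, ∑ i ∈ S, ∑ j, (A i j * x j) ^ 2
      = (∑ i ∈ S, ∑ j, A i j ^ 2) * (b ^ 2 / (Fintype.card ι + 2)) := by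
  have h_row (i : κ) : ∫ x in ball (0 : EuclideanSpace ℝ ι) b, ∑ j, (A i j * x j) ^ 2
      = volume.real (ball (0 : EuclideanSpace ℝ ι) b)
          * ((∑ j, A i j ^ 2) * (b ^ 2 / (Fintype.card ι + 2))) := by
    rw [integral_finsetSum _ fun j _ => Continuous.integrableOn_ball (by fun_prop) _ _, sum_mul,
      mul_sum]
    simp only [mul_pow, integral_const_mul, integral_sq_apply_ball hb.le]
    exact sum_congr rfl fun j _ => by ring
  have h_pos : volume.real (ball (0 : EuclideanSpace ℝ ι) b) ≠ 0 :=
    (ENNReal.toReal_pos (measure_ball_pos _ _ hb).ne' measure_ball_lt_top.ne).ne'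
  rw [setAverage_eq, smul_eq_mul,
    integral_finsetSum _ fun i _ => Continuous.integrableOn_ball (by fun_prop) _ _]
  rw [sum_congr rfl fun i _ => h_row i, ← mul_sum, ← sum_mul]
  field_simp

end EuclideanBall

section Counting

variable {ι κ : Type*} [Fintype ι] [Fintype κ] {A : ι → κ → ℝ}

theorem sum_sum_sq_le_card_mul_sub_card_eq_zero (hA : ∀ i j, |A i j| ≤ 1) (S : Finset ι) :
    ∑ i ∈ S, ∑ j, A i j ^ 2
      ≤ Fintype.card ι * Fintype.card κ - #{p : ι × κ | A p.1 p.2 = 0} := by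
  have h_card := card_filter_add_card_filter_not (s := (univ : Finset (ι × κ)))
    (fun p => A p.1 p.2 = 0)
  rw [card_univ, Fintype.card_prod] at h_card
  calc ∑ i ∈ S, ∑ j, A i j ^ 2 ≤ ∑ i, ∑ j, A i j ^ 2 :=
        sum_le_sum_of_subset_of_nonneg (subset_univ S) fun i _ _ => by positivity
    _ = ∑ p ∈ {p : ι × κ | A p.1 p.2 ≠ 0}, A p.1 p.2 ^ 2 := by
        rw [← Fintype.sum_prod_type', sum_filter_of_ne fun p _ h => by simpa using h]
    _ ≤ #{p : ι × κ | A p.1 p.2 ≠ 0} • (1 : ℝ) :=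
        sum_le_card_nsmul _ _ _ fun p _ => (sq_le_one_iff_abs_le_one _).2 (hA p.1 p.2)
    _ = _ := by
        rw [nsmul_one, eq_sub_iff_add_eq]
        exact_mod_cast (add_comm _ _).trans h_card

theorem sum_sum_sq_le_card_mul_sub_card_mul (hA : ∀ i j, |A i j| ≤ 1) {S T : Finset ι}
    (hST : Disjoint S T) :
    ∑ i ∈ S, ∑ j, A i j ^ 2 ≤ Fintype.card ι * Fintype.card κ - Fintype.card κ * #T := by
  classical
  have h_card : #S + #T ≤ Fintype.card ι := card_union_of_disjoint hST ▸ card_le_univ _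
  calc ∑ i ∈ S, ∑ j, A i j ^ 2 ≤ ∑ _i ∈ S, ∑ _j : κ, (1 : ℝ) :=
        sum_le_sum fun i _ => sum_le_sum fun j _ => (sq_le_one_iff_abs_le_one _).2 (hA i j)
    _ = #S * Fintype.card κ := by simp
    _ ≤ _ := by
        have : ((#S : ℕ) : ℝ) + #T ≤ Fintype.card ι := by exact_mod_cast h_card
        nlinarith [(Fintype.card κ).cast_nonneg (α := ℝ)]

theorem sum_sum_sq_le_card_mul_sub_max (hA : ∀ i j, |A i j| ≤ 1) {S T : Finset ι}
    (hST : Disjoint S T) :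
    ∑ i ∈ S, ∑ j, A i j ^ 2 ≤ Fintype.card ι * Fintype.card κ
      - max (#{p : ι × κ | A p.1 p.2 = 0} : ℝ) (Fintype.card κ * #T) := by
  rw [le_sub_comm, max_le_iff]
  exact ⟨le_sub_comm.1 (sum_sum_sq_le_card_mul_sub_card_eq_zero hA S),
    le_sub_comm.1 (sum_sum_sq_le_card_mul_sub_card_mul hA hST)⟩

end Counting

theorem stmt7_general (h d : ℕ) (hd : 1 ≤ d) (b : ℝ) (hb : 0 < b)
    (Mv : Fin h → ℝ) (MU : Fin h → Fin d → ℝ)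
    (hMU : ∀ i j, MU i j = 0 ∨ MU i j = 1) :
    ⨍ x in Metric.ball (0 : EuclideanSpace ℝ (Fin d)) b,
        Real.sqrt (∑ i ∈ Finset.univ.filter (fun i : Fin h => Mv i = 1),
          ∑ j, (MU i j * x j) ^ 2)
      ≤ Real.sqrt
          (((h : ℝ) -
              max (((Finset.univ.filter fun p : Fin h × Fin d => MU p.1 p.2 = 0).card : ℝ)) ((d : ℝ) * ((Finset.univ.filter fun i : Fin h => Mv i = 0).card : ℝ)) / d) *
            ((d : ℝ) * b ^ 2 / (d + 2))) := by
  have hMU_abs (i j) : |MU i j| ≤ 1 := by rcases hMU i j with h0 | h1 <;> simp [*]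
  have h_disj : Disjoint (univ.filter fun i => Mv i = 1) (univ.filter fun i => Mv i = 0) :=
    disjoint_filter.2 fun i _ h1 h0 => by simp [h1] at h0
  have h_count := sum_sum_sq_le_card_mul_sub_max hMU_abs h_disj
  simp only [Fintype.card_fin] at h_count
  have hd₀ : (d : ℝ) ≠ 0 := by positivity
  have h_ball := Metric.measure_ball_pos volume (0 : EuclideanSpace ℝ (Fin d)) hb
  calc _ ≤ √(⨍ x in Metric.ball (0 : EuclideanSpace ℝ (Fin d)) b,
        ∑ i ∈ univ.filter (fun i : Fin h => Mv i = 1), ∑ j, (MU i j * x j) ^ 2) :=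
        strictConcaveOn_sqrt.concaveOn.le_map_set_average continuous_sqrt.continuousOn isClosed_Ici
          h_ball.ne' measure_ball_lt_top.ne (ae_of_all _ fun x => Set.mem_Ici.2 (by positivity))
          (Continuous.integrableOn_ball (by fun_prop) _ _)
          (Continuous.integrableOn_ball (by fun_prop) _ _)
    _ = √((∑ i ∈ univ.filter (fun i : Fin h => Mv i = 1), ∑ j, MU i j ^ 2)
          * (b ^ 2 / (d + 2))) := by
        rw [setAverage_sum_sum_sq_mul_apply_ball hb, Fintype.card_fin]
    _ ≤ _ := by
        refine sqrt_le_sqrt ((mul_le_mul_of_nonneg_right h_count (by positivity)).trans_eq ?_)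
        field_simp

theorem stmt7 (h d : ℕ) (hh : 1 ≤ h) (hd : 1 ≤ d) (b : ℝ) (hb : 0 < b)
    (Mv : Fin h → ℝ) (MU : Fin h → Fin d → ℝ)
    (hMv : ∀ i, Mv i = 0 ∨ Mv i = 1) (hMU : ∀ i j, MU i j = 0 ∨ MU i j = 1) :
    ⨍ x in Metric.ball (0 : EuclideanSpace ℝ (Fin d)) b,
        Real.sqrt (∑ i ∈ Finset.univ.filter (fun i : Fin h => Mv i = 1),
          ∑ j, (MU i j * x j) ^ 2)
      ≤ Real.sqrt
          (((h : ℝ) -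
              max (((Finset.univ.filter fun p : Fin h × Fin d => MU p.1 p.2 = 0).card : ℝ)) ((d : ℝ) * ((Finset.univ.filter fun i : Fin h => Mv i = 0).card : ℝ)) / d) *
            ((d : ℝ) * b ^ 2 / (d + 2))) :=
  stmt7_general h d hd b hb Mv MU hMU
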